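/- Let p be an odd prime and let θ be an integer such that 1 + θ² is not a square in ZMod p. Let (a_m)_{m=0,…,p} be the complete set of p+1 MUBs of ℂ^p (the p Fourier–Gauss bases and the standard basis), and let P_p be the control-phase on ℂ^p ⊗ ℂ^p. Then the p²+1 orthonormal bases of EuclideanSpace ℂ (Fin p × Fin p) given by the standard basis { |s⟩ ⊗ |t⟩ } together with the p² bases { P_p^{θν} (a_μ^x ⊗ a_{μ+ν}^y) : x, y ∈ Fin p } for μ, ν ∈ ℤ/pℤ (subscripts mod p) are pairwise mutually unbiased, i.e. form a complete set of MUBs in dimension p². -/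

import Mathlib

/-- `α_p = exp(2πi/p)`, the `p`-th root of unity. -/
noncomputable def rootOfUnity (p : ℕ) : ℂ := Complex.exp (2 * Real.pi * Complex.I / p)

/-- The Fourier–Gauss vector `|j_m⟩` with components `p^{-1/2}·α_p^{js + ms²}`. -/
noncomputable def fourierGauss (p : ℕ) (j m : ℕ) : EuclideanSpace ℂ (Fin p) :=
  WithLp.toLp 2 (fun s : Fin p => (Real.sqrt p : ℂ)⁻¹ * rootOfUnity p ^ (j * (s : ℕ) + m * (s : ℕ) ^ 2))

/-- The product vector `(u ⊗ v)(a,b) = u(a)·v(b)`. -/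
noncomputable def tens {p : ℕ} (u v : EuclideanSpace ℂ (Fin p)) :
    EuclideanSpace ℂ (Fin p × Fin p) :=
  WithLp.toLp 2 (fun ab : Fin p × Fin p => u ab.1 * v ab.2)

/-- The control-phase `P_p`, the diagonal unitary with `P_p(|s⟩⊗|t⟩) = α_p^{st}|s⟩⊗|t⟩`. -/
noncomputable def cphase (p : ℕ) : Matrix (Fin p × Fin p) (Fin p × Fin p) ℂ :=
  Matrix.diagonal fun st : Fin p × Fin p => rootOfUnity p ^ ((st.1 : ℕ) * (st.2 : ℕ))

/-- The vectors `P_p^{θν} (a_μ^x ⊗ a_{μ+ν}^y)` of the generated bases (subscripts mod `p`). -/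
noncomputable def cpVec (p : ℕ) (θ : ℤ) (μ ν : ZMod p) (x y : Fin p) :
    EuclideanSpace ℂ (Fin p × Fin p) :=
  WithLp.toLp 2 ((cphase p ^ (((θ : ZMod p) * ν).val)).mulVec
    (tens (fourierGauss p (x : ℕ) μ.val) (fourierGauss p (y : ℕ) (μ.val + ν.val))))

/-!
Write `ψ = ZMod.stdAddChar`. The overlap of two vectors from the bases `(μ, ν)` and `(μ', ν')` is
`p⁻²` times a character sum `∑ ψ (Q(s, t) + linear)` over `(ZMod p)²`, where `Q` is the binary
quadratic form `(μ'-μ) s² + θ(ν'-ν) s t + ((μ'-μ) + (ν'-ν)) t²`. Expanding `|∑ ψ(Q + L)|²` and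
shifting the summation variable leaves a sum over the kernel of the polar form of `Q`, so it equals
`p²` as soon as `disc Q = (1 + θ²)(ν'-ν)² - (2(μ'-μ) + (ν'-ν))²` is nonzero, which is exactly what
the non-squareness of `1 + θ²` guarantees. Overlaps with the standard basis are single entries,
all of modulus `1/p`.
-/

theorem eq_zero_of_polar_eq_zero {F : Type*} [Field F] {a b c : F} (hdisc : discrim a b c ≠ 0)
    {u v : F} (h₁ : 2 * a * u + b * v = 0) (h₂ : b * u + 2 * c * v = 0) : u = 0 ∧ v = 0 := by
  have hu : discrim a b c * u = 0 := by
    unfold discrim; linear_combination b * h₂ - 2 * c * h₁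
  have hv : discrim a b c * v = 0 := by
    unfold discrim; linear_combination b * h₁ - 2 * a * h₂
  exact ⟨(mul_eq_zero.mp hu).resolve_left hdisc, (mul_eq_zero.mp hv).resolve_left hdisc⟩

section QuadraticCharacterSum

variable {F : Type*} [Field F] [Fintype F] [DecidableEq F] {ψ : AddChar F ℂ}

theorem AddChar.sum_prod_mulShift (hψ : ψ.IsPrimitive) (x y : F) :
    ∑ q : F × F, ψ (q.1 * x + q.2 * y) =
      if x = 0 ∧ y = 0 then (Fintype.card F : ℂ) ^ 2 else 0 := by
  simp only [Fintype.sum_prod_type, AddChar.map_add_eq_mul, ← Finset.sum_mul_sum,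
    AddChar.sum_mulShift _ hψ]
  split_ifs <;> simp_all [sq]

theorem AddChar.norm_sq_sum_quadratic (hψ : ψ.IsPrimitive) {a b c : F} (hdisc : discrim a b c ≠ 0)
    (d e : F) :
    ‖∑ q : F × F, ψ (a * q.1 ^ 2 + b * q.1 * q.2 + c * q.2 ^ 2 + d * q.1 + e * q.2)‖ ^ 2 =
      (Fintype.card F : ℝ) ^ 2 := by
  set Q : F × F → F := fun q => a * q.1 ^ 2 + b * q.1 * q.2 + c * q.2 ^ 2 + d * q.1 + e * q.2
  have hpolar : ∀ q u : F × F, Q (q + u) - Q q =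
      Q u + (q.1 * (2 * a * u.1 + b * u.2) + q.2 * (b * u.1 + 2 * c * u.2)) := by
    intro q u; simp only [Q, Prod.fst_add, Prod.snd_add]; ring
  have key : (starRingEnd ℂ) (∑ q, ψ (Q q)) * ∑ q, ψ (Q q) = (Fintype.card F : ℂ) ^ 2 :=
    calc (starRingEnd ℂ) (∑ q, ψ (Q q)) * ∑ q, ψ (Q q)
        = ∑ q, ∑ u, ψ (Q (q + u) - Q q) := by
          simp only [map_sum, ← AddChar.map_neg_eq_conj, Finset.sum_mul_sum]
          refine Finset.sum_congr rfl fun q _ => ?_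
          refine (Fintype.sum_equiv (Equiv.addLeft q) _ _ fun u => ?_).symm
          rw [sub_eq_neg_add, AddChar.map_add_eq_mul]; rfl
      _ = ∑ u, ψ (Q u) *
            ∑ q : F × F, ψ (q.1 * (2 * a * u.1 + b * u.2) + q.2 * (b * u.1 + 2 * c * u.2)) := by
          simp only [hpolar, AddChar.map_add_eq_mul, Finset.mul_sum]
          exact Finset.sum_comm
      _ = (Fintype.card F : ℂ) ^ 2 := by
          simp only [AddChar.sum_prod_mulShift hψ]
          rw [Fintype.sum_eq_single 0 fun u hu => ?_]
          · simp [Q]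
          · rw [if_neg fun h => hu (Prod.ext_iff.mpr (eq_zero_of_polar_eq_zero hdisc h.1 h.2)),
              mul_zero]
  rw [mul_comm, Complex.mul_conj'] at key
  exact_mod_cast key

end QuadraticCharacterSum

theorem discrim_ne_zero_of_not_sq {F : Type*} [Field F] {θ : F}
    (hθ : ¬ ∃ x : F, x ^ 2 = 1 + θ ^ 2) {q : F × F} (hq : q ≠ 0) :
    discrim q.1 (θ * q.2) (q.1 + q.2) ≠ 0 := by
  intro h
  have hsq : (2 * q.1 + q.2) ^ 2 = (1 + θ ^ 2) * q.2 ^ 2 := by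
    unfold discrim at h; linear_combination -h
  by_cases hn : q.2 = 0
  · -- in characteristic 2, `1 + θ² = (1 + θ)²`
    have h2 : (2 : F) ≠ 0 := fun h2 => hθ ⟨1 + θ, by linear_combination θ * h2⟩
    have hm : q.1 = 0 := by simpa [hn, h2] using hsq
    exact hq (Prod.ext hm hn)
  · exact hθ ⟨(2 * q.1 + q.2) / q.2, by field_simp; linear_combination hsq⟩

theorem rootOfUnity_pow_eq_stdAddChar (p n : ℕ) [NeZero p] :
    rootOfUnity p ^ n = ZMod.stdAddChar (n : ZMod p) := by
  rw [ZMod.stdAddChar_apply, ZMod.toCircle_natCast, rootOfUnity, ← Complex.exp_nat_mul]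
  ring_nf

theorem bijective_fin_natCast (p : ℕ) [NeZero p] :
    Function.Bijective fun i : Fin p => ((i : ℕ) : ZMod p) := by
  refine (Fintype.bijective_iff_injective_and_card _).mpr ⟨fun i j hij => Fin.ext ?_, by simp⟩
  simpa [ZMod.val_cast_of_lt i.isLt, ZMod.val_cast_of_lt j.isLt] using congrArg ZMod.val hij

theorem cpVec_apply {p : ℕ} [NeZero p] (θ : ℤ) (μ ν : ZMod p) (x y : Fin p)
    (st : Fin p × Fin p) :
    cpVec p θ μ ν x y st = (p : ℂ)⁻¹ * ZMod.stdAddChar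
      (μ * ((st.1 : ℕ) : ZMod p) ^ 2
        + (θ : ZMod p) * ν * ((st.1 : ℕ) : ZMod p) * ((st.2 : ℕ) : ZMod p)
        + (μ + ν) * ((st.2 : ℕ) : ZMod p) ^ 2 + ((x : ℕ) : ZMod p) * ((st.1 : ℕ) : ZMod p)
        + ((y : ℕ) : ZMod p) * ((st.2 : ℕ) : ZMod p)) := by
  simp only [cpVec, cphase, tens, fourierGauss, Matrix.diagonal_pow, Matrix.mulVec_diagonal,
    Pi.pow_apply]
  rw [← pow_mul]
  simp only [rootOfUnity_pow_eq_stdAddChar]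
  have hsqrt : ((Real.sqrt p : ℂ))⁻¹ * ((Real.sqrt p : ℂ))⁻¹ = (p : ℂ)⁻¹ := by
    rw [← mul_inv, ← Complex.ofReal_mul, Real.mul_self_sqrt (Nat.cast_nonneg p)]
    push_cast; rfl
  rw [mul_mul_mul_comm, ← mul_assoc, mul_comm _ (_⁻¹), mul_assoc, hsqrt, ← AddChar.map_add_eq_mul,
    mul_left_comm, ← AddChar.map_add_eq_mul]
  congr 2
  push_cast [ZMod.natCast_val, ZMod.cast_id]
  ring

theorem inner_cpVec {p : ℕ} [NeZero p] (θ : ℤ) (μ ν μ' ν' : ZMod p) (x y x' y' : Fin p) :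
    inner ℂ (cpVec p θ μ ν x y) (cpVec p θ μ' ν' x' y') = (p : ℂ)⁻¹ ^ 2 *
      ∑ q : ZMod p × ZMod p, ZMod.stdAddChar ((μ' - μ) * q.1 ^ 2
        + (θ : ZMod p) * (ν' - ν) * q.1 * q.2 + ((μ' - μ) + (ν' - ν)) * q.2 ^ 2
        + (((x' : ℕ) : ZMod p) - ((x : ℕ) : ZMod p)) * q.1
        + (((y' : ℕ) : ZMod p) - ((y : ℕ) : ZMod p)) * q.2) := by
  rw [PiLp.inner_apply, Finset.mul_sum]
  refine Fintype.sum_bijective _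
    ((bijective_fin_natCast p).prodMap (bijective_fin_natCast p)) _ _ fun st => ?_
  rw [RCLike.inner_apply, cpVec_apply, cpVec_apply, map_mul, ← AddChar.map_neg_eq_conj,
    map_inv₀, map_natCast, mul_mul_mul_comm, ← sq, ← AddChar.map_add_eq_mul]
  congr 2
  simp only [Prod.map_fst, Prod.map_snd]
  ring

theorem cphase_complete_mub_general (p : ℕ) (hp : p.Prime) (θ : ℤ)
    (hθ : ¬ ∃ x : ZMod p, x ^ 2 = 1 + (θ : ZMod p) ^ 2) :
    (∀ μ ν μ' ν' : ZMod p, (μ, ν) ≠ (μ', ν') →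
      ∀ x y x' y' : Fin p,
        ‖(inner ℂ (cpVec p θ μ ν x y) (cpVec p θ μ' ν' x' y') : ℂ)‖ ^ 2
          = 1 / ((p : ℝ) ^ 2)) ∧
    (∀ (μ ν : ZMod p) (x y : Fin p) (st : Fin p × Fin p),
      ‖(inner ℂ (EuclideanSpace.single st (1 : ℂ)) (cpVec p θ μ ν x y) : ℂ)‖ ^ 2
        = 1 / ((p : ℝ) ^ 2)) := by
  have := Fact.mk hp
  refine ⟨fun μ ν μ' ν' hne x y x' y' => ?_, fun μ ν x y st => ?_⟩
  · have hdisc : discrim (μ' - μ) (θ * (ν' - ν)) ((μ' - μ) + (ν' - ν)) ≠ 0 :=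
      discrim_ne_zero_of_not_sq hθ (sub_ne_zero.mpr hne.symm)
    rw [inner_cpVec, norm_mul, mul_pow,
      AddChar.norm_sq_sum_quadratic (ZMod.isPrimitive_stdAddChar p) hdisc, ZMod.card, norm_pow,
      norm_inv, Complex.norm_natCast]
    have hp0 : (p : ℝ) ≠ 0 := by exact_mod_cast hp.ne_zero
    field_simp
  · rw [EuclideanSpace.inner_single_left, cpVec_apply, map_one, one_mul, norm_mul,
      AddChar.norm_apply, mul_one, norm_inv, Complex.norm_natCast]
    ring

/-- If `1 + θ²` is not a square mod the odd prime `p`, then the standard basis of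
`ℂ^p ⊗ ℂ^p` together with the `p²` bases `{P_p^{θν}(a_μ^x ⊗ a_{μ+ν}^y)}` (`μ, ν ∈ ℤ/pℤ`)
are pairwise mutually unbiased: a complete set of `p²+1` MUBs in dimension `p²`. -/
theorem cphase_complete_mub (p : ℕ) (hp : p.Prime) (hodd : Odd p) (θ : ℤ)
    (hθ : ¬ ∃ x : ZMod p, x ^ 2 = 1 + (θ : ZMod p) ^ 2) :
    (∀ μ ν μ' ν' : ZMod p, (μ, ν) ≠ (μ', ν') →
      ∀ x y x' y' : Fin p,
        ‖(inner ℂ (cpVec p θ μ ν x y) (cpVec p θ μ' ν' x' y') : ℂ)‖ ^ 2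
          = 1 / ((p : ℝ) ^ 2)) ∧
    (∀ (μ ν : ZMod p) (x y : Fin p) (st : Fin p × Fin p),
      ‖(inner ℂ (EuclideanSpace.single st (1 : ℂ)) (cpVec p θ μ ν x y) : ℂ)‖ ^ 2
        = 1 / ((p : ℝ) ^ 2)) :=
  cphase_complete_mub_general p hp θ hθ
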